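/- Let n = 2, t_1 = t_2 = 1, q_1 = 1/2, and q_2 = 15/16. Then the Hider strategy p' = (15/19, 4/19) is an optimal (max-min) Hider strategy: inf_ξ u(p',ξ) = sup_p inf_ξ u(p,ξ), where the supremum is over all mixed Hider strategies p and the infimum over all Searcher sequences ξ. -/

import Mathlib

open scoped ENNReal

/-- `looks ξ j k` = number of looks in box `j` among the first `k` looks of `ξ`. -/
def looks {n : ℕ} (ξ : ℕ → Fin n) (j : Fin n) (k : ℕ) : ℕ :=
  ((Finset.range k).filter (fun i => ξ i = j)).card

/-- Expected search time (in `[0,∞]`) to find a target hidden in box `j`, when the boxes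
have search times `t` and detection probabilities `q`, and the Searcher uses the
sequence `ξ`. -/
noncomputable def searchTime {n : ℕ} (t q : Fin n → ℝ) (j : Fin n) (ξ : ℕ → Fin n) : ℝ≥0∞ :=
  ∑' k : ℕ, ENNReal.ofReal (t (ξ k) * (1 - q j) ^ looks ξ j k)

/-- Expected search time against the mixed Hider strategy `p`. -/
noncomputable def mixedSearchTime {n : ℕ} (t q : Fin n → ℝ) (p : Fin n → ℝ)
    (ξ : ℕ → Fin n) : ℝ≥0∞ :=
  ∑ j : Fin n, ENNReal.ofReal (p j) * searchTime t q j ξ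

/-!
With unit search times, `u(p, ξ) = ∑ₖ P(target undetected after k looks)`, so a sequence that
minimises the undetected probability at every time `k` simultaneously is optimal against `p`.
Against `p' = (15/19, 4/19)` this probability, as a function of the number `m` of looks in the
second box, is convex with minimum at `m = ⌊(k + 2)/5⌋`; the 5-periodic sequence looking in the
second box at the times `≡ 2 (mod 5)` realises this for every `k`, so `p'` guarantees its value
`142/57`. Both that sequence and the one using the times `≡ 1 (mod 5)` have value `142/57`
against `p'`, with per-box expected times `(34/15, 10/3)` and `(38/15, 7/3)`; since these
differences have opposite signs, every Hider strategy does no better than `142/57` against one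
of the two. Boxes `1, 2` of the paper are `0, 1` here.
-/

lemma looks_succ {n : ℕ} (ξ : ℕ → Fin n) (j : Fin n) (k : ℕ) :
    looks ξ j (k + 1) = looks ξ j k + if ξ k = j then 1 else 0 := by
  simp only [looks, Finset.card_filter, Finset.sum_range_succ]

lemma sum_looks {n : ℕ} (ξ : ℕ → Fin n) (k : ℕ) : ∑ j, looks ξ j k = k := by
  unfold looks
  simpa using (Finset.card_eq_sum_card_fiberwise (s := Finset.range k) (t := Finset.univ)
    (f := ξ) (fun _ _ => Finset.mem_univ _)).symm

lemma looks_add_of_periodic {n P : ℕ} {ξ : ℕ → Fin n} (hξ : ∀ k, ξ (k + P) = ξ k)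
    (j : Fin n) (k : ℕ) : looks ξ j (P + k) = looks ξ j P + looks ξ j k := by
  simp only [looks, Finset.card_filter]
  rw [Finset.sum_range_add]
  simp only [add_comm P, hξ]

theorem ENNReal.tsum_eq_mul_inv_of_add_period {f : ℕ → ℝ≥0∞} {P : ℕ} [NeZero P] {c : ℝ≥0∞}
    (hf : ∀ k, f (k + P) = c * f k) : ∑' k, f k = (∑ k ∈ Finset.range P, f k) * (1 - c)⁻¹ := by
  have hiter : ∀ m r, f (m * P + r) = c ^ m * f r := by
    intro m r
    induction m with
    | zero => simp
    | succ m ih => rw [add_mul, one_mul, add_right_comm, hf, ih, pow_succ', mul_assoc]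
  calc ∑' k, f k = ∑' p : ℕ × Fin P, f (p.1 * P + p.2) :=
        ((Nat.divModEquiv P).symm.tsum_eq f).symm
    _ = ∑' m : ℕ, c ^ m * ∑ r : Fin P, f r := by
        simp only [ENNReal.tsum_prod', hiter, tsum_fintype, Finset.mul_sum]
    _ = (∑ k ∈ Finset.range P, f k) * (1 - c)⁻¹ := by
        rw [ENNReal.tsum_mul_right, ENNReal.tsum_geometric, Fin.sum_univ_eq_sum_range, mul_comm]

theorem searchTime_of_periodic {n P : ℕ} [NeZero P] {t q : Fin n → ℝ} {ξ : ℕ → Fin n}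
    {j : Fin n} (ht : ∀ i, 0 ≤ t i) (hq : q j ≤ 1) (hξ : ∀ k, ξ (k + P) = ξ k)
    (hP : (1 - q j) ^ looks ξ j P < 1) :
    searchTime t q j ξ = ENNReal.ofReal
      ((∑ k ∈ Finset.range P, t (ξ k) * (1 - q j) ^ looks ξ j k) /
        (1 - (1 - q j) ^ looks ξ j P)) := by
  have hr : 0 ≤ 1 - q j := sub_nonneg.2 hq
  have hterm : ∀ k, 0 ≤ t (ξ k) * (1 - q j) ^ looks ξ j k :=
    fun k => mul_nonneg (ht _) (pow_nonneg hr _)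
  unfold searchTime
  rw [ENNReal.tsum_eq_mul_inv_of_add_period (c := ENNReal.ofReal ((1 - q j) ^ looks ξ j P))
      fun k => by
        rw [← ENNReal.ofReal_mul (pow_nonneg hr _), hξ, add_comm k P,
          looks_add_of_periodic hξ, pow_add, mul_left_comm],
    ← ENNReal.ofReal_sum_of_nonneg fun k _ => hterm k, ← ENNReal.ofReal_one,
    ← ENNReal.ofReal_sub _ (pow_nonneg hr _), ← ENNReal.ofReal_inv_of_pos (sub_pos.2 hP),
    ← ENNReal.ofReal_mul (Finset.sum_nonneg fun k _ => hterm k), div_eq_mul_inv]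

def undetectedProb {n : ℕ} (q p : Fin n → ℝ) (ξ : ℕ → Fin n) (k : ℕ) : ℝ :=
  ∑ j, p j * (1 - q j) ^ looks ξ j k

section UnitSearchTimes

variable {n : ℕ} {q p : Fin n → ℝ}

lemma mixedSearchTime_eq_tsum_undetectedProb (hp : ∀ j, 0 ≤ p j) (hq : ∀ j, q j ≤ 1)
    (ξ : ℕ → Fin n) :
    mixedSearchTime (fun _ => 1) q p ξ = ∑' k, ENNReal.ofReal (undetectedProb q p ξ k) := by
  have hterm : ∀ j k, 0 ≤ p j * (1 - q j) ^ looks ξ j k :=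
    fun j k => mul_nonneg (hp j) (pow_nonneg (sub_nonneg.2 (hq j)) _)
  simp only [mixedSearchTime, searchTime, undetectedProb, one_mul, ← ENNReal.tsum_mul_left,
    ← ENNReal.ofReal_mul (hp _)]
  rw [← Summable.tsum_finsetSum fun _ _ => ENNReal.summable]
  simp only [ENNReal.ofReal_sum_of_nonneg fun j _ => hterm j _]

lemma mixedSearchTime_le_of_undetectedProb_le (hp : ∀ j, 0 ≤ p j) (hq : ∀ j, q j ≤ 1)
    {ξ ξ' : ℕ → Fin n} (h : ∀ k, undetectedProb q p ξ k ≤ undetectedProb q p ξ' k) :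
    mixedSearchTime (fun _ => 1) q p ξ ≤ mixedSearchTime (fun _ => 1) q p ξ' := by
  rw [mixedSearchTime_eq_tsum_undetectedProb hp hq, mixedSearchTime_eq_tsum_undetectedProb hp hq]
  exact ENNReal.tsum_le_tsum fun k => ENNReal.ofReal_le_ofReal (h k)

end UnitSearchTimes

lemma mixedSearchTime_eq_ofReal_sum {n : ℕ} {t q p : Fin n → ℝ} {ξ : ℕ → Fin n}
    (hp : ∀ j, 0 ≤ p j) {u : Fin n → ℝ} (hu : ∀ j, 0 ≤ u j)
    (h : ∀ j, searchTime t q j ξ = ENNReal.ofReal (u j)) :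
    mixedSearchTime t q p ξ = ENNReal.ofReal (∑ j, p j * u j) := by
  simp only [mixedSearchTime, h, ← ENNReal.ofReal_mul (hp _)]
  rw [ENNReal.ofReal_sum_of_nonneg fun j _ => mul_nonneg (hp j) (hu j)]

theorem Nat.apply_le_of_succ_le_of_le_succ {α : Type*} [Preorder α] {f : ℕ → α} {m₀ : ℕ}
    (hanti : ∀ m < m₀, f (m + 1) ≤ f m) (hmono : ∀ m ≥ m₀, f m ≤ f (m + 1)) (m : ℕ) :
    f m₀ ≤ f m := by
  rcases le_total m₀ m with h | h
  · exact monotoneOn_nat_Ici_of_le_succ hmono (Set.mem_Ici.2 le_rfl) h h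
  · clear hmono
    induction m₀, h using Nat.le_induction with
    | base => exact le_rfl
    | succ k _ ih =>
      exact (hanti k k.lt_succ_self).trans (ih fun i hi => hanti i (Nat.lt_succ_of_lt hi))

def cyclicSearch (r : ℕ) : ℕ → Fin 2 := fun k => if k % 5 = r then 1 else 0

lemma cyclicSearch_add_five (r k : ℕ) : cyclicSearch r (k + 5) = cyclicSearch r k := by
  simp [cyclicSearch]

lemma looks_cyclicSearch_one {r : ℕ} (hr : r < 5) (k : ℕ) :
    looks (cyclicSearch r) 1 k = (k + 4 - r) / 5 := by
  induction k with
  | zero => simp only [looks, Finset.range_zero, Finset.filter_empty, Finset.card_empty]; omega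
  | succ k ih =>
    rw [looks_succ, ih]
    by_cases h : k % 5 = r <;> simp [cyclicSearch, h] <;> omega

lemma looks_cyclicSearch_zero {r : ℕ} (hr : r < 5) (k : ℕ) :
    looks (cyclicSearch r) 0 k = k - (k + 4 - r) / 5 := by
  have := sum_looks (cyclicSearch r) k
  rw [Fin.sum_univ_two, looks_cyclicSearch_one hr] at this
  omega

lemma searchTime_cyclicSearch_two (j : Fin 2) :
    searchTime (fun _ => 1) ![1 / 2, 15 / 16] j (cyclicSearch 2) =
      ENNReal.ofReal (![34 / 15, 10 / 3] j) := by
  fin_cases j <;>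
  · rw [searchTime_of_periodic (P := 5) (fun _ => zero_le_one) (by norm_num)
      (cyclicSearch_add_five 2) (by norm_num [looks_cyclicSearch_zero, looks_cyclicSearch_one])]
    norm_num [Finset.sum_range_succ, looks_cyclicSearch_zero, looks_cyclicSearch_one]

lemma searchTime_cyclicSearch_one (j : Fin 2) :
    searchTime (fun _ => 1) ![1 / 2, 15 / 16] j (cyclicSearch 1) =
      ENNReal.ofReal (![38 / 15, 7 / 3] j) := by
  fin_cases j <;>
  · rw [searchTime_of_periodic (P := 5) (fun _ => zero_le_one) (by norm_num)
      (cyclicSearch_add_five 1) (by norm_num [looks_cyclicSearch_zero, looks_cyclicSearch_one])]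
    norm_num [Finset.sum_range_succ, looks_cyclicSearch_zero, looks_cyclicSearch_one]

/-- The undetected probability against `p'` after `k` looks, `m` of them in box `1`. The
exponents are integers so that the function makes sense, and stays convex, for all `m`. -/
noncomputable def exampleUndetected (k m : ℕ) : ℝ :=
  15 / 19 * (2 : ℝ) ^ ((m : ℤ) - k) + 4 / 19 * (2 : ℝ) ^ (-4 * (m : ℤ))

lemma undetectedProb_eq_exampleUndetected (ξ : ℕ → Fin 2) (k : ℕ) :
    undetectedProb ![1 / 2, 15 / 16] ![15 / 19, 4 / 19] ξ k =
      exampleUndetected k (looks ξ 1 k) := by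
  have hk := sum_looks ξ k
  rw [Fin.sum_univ_two] at hk
  have h0 : (1 - 1 / 2 : ℝ) ^ looks ξ 0 k = 2 ^ ((looks ξ 1 k : ℤ) - k) := by
    rw [show (1 - 1 / 2 : ℝ) = 2 ^ (-1 : ℤ) by norm_num, ← zpow_natCast, ← zpow_mul]
    congr 1
    omega
  have h1 : (1 - 15 / 16 : ℝ) ^ looks ξ 1 k = 2 ^ (-4 * (looks ξ 1 k : ℤ)) := by
    rw [show (1 - 15 / 16 : ℝ) = 2 ^ (-4 : ℤ) by norm_num, ← zpow_natCast, ← zpow_mul]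
  simp only [undetectedProb, exampleUndetected, Fin.sum_univ_two, Matrix.cons_val_zero,
    Matrix.cons_val_one, h0, h1]

lemma exampleUndetected_succ_sub (k m : ℕ) :
    exampleUndetected k (m + 1) - exampleUndetected k m =
      15 / 19 * ((2 : ℝ) ^ ((m : ℤ) - k) - 2 ^ (-4 * (m : ℤ) - 2)) := by
  have h1 : (2 : ℝ) ^ (((m + 1 : ℕ) : ℤ) - k) = 2 * 2 ^ ((m : ℤ) - k) := by
    rw [Nat.cast_succ, add_sub_right_comm, zpow_add_one₀ two_ne_zero, mul_comm]
  have h2 : (2 : ℝ) ^ (-4 * ((m + 1 : ℕ) : ℤ)) = 2 ^ (-4 * (m : ℤ) - 2) / 4 := by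
    rw [show -4 * ((m + 1 : ℕ) : ℤ) = (-4 * (m : ℤ) - 2) + (-2) by push_cast; ring,
      zpow_add₀ two_ne_zero]
    norm_num [div_eq_mul_inv]
  have h3 : (2 : ℝ) ^ (-4 * (m : ℤ)) = 4 * 2 ^ (-4 * (m : ℤ) - 2) := by
    rw [show -4 * (m : ℤ) = (-4 * (m : ℤ) - 2) + 2 by ring, zpow_add₀ two_ne_zero]
    norm_num [mul_comm]
  simp only [exampleUndetected, h1, h2, h3]
  ring

lemma exampleUndetected_le (k m : ℕ) :
    exampleUndetected k ((k + 2) / 5) ≤ exampleUndetected k m := by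
  -- the increment has the sign of `5 m + 2 - k`
  refine Nat.apply_le_of_succ_le_of_le_succ (fun m hm => ?_) (fun m hm => ?_) m
  · rw [← sub_nonpos, exampleUndetected_succ_sub]
    have : (2 : ℝ) ^ ((m : ℤ) - k) ≤ 2 ^ (-4 * (m : ℤ) - 2) :=
      (zpow_le_zpow_iff_right₀ one_lt_two).2 (by omega)
    nlinarith
  · rw [← sub_nonneg, exampleUndetected_succ_sub]
    have : (2 : ℝ) ^ (-4 * (m : ℤ) - 2) ≤ 2 ^ ((m : ℤ) - k) :=
      (zpow_le_zpow_iff_right₀ one_lt_two).2 (by omega)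
    nlinarith

lemma undetectedProb_cyclicSearch_two_le (ξ : ℕ → Fin 2) (k : ℕ) :
    undetectedProb ![1 / 2, 15 / 16] ![15 / 19, 4 / 19] (cyclicSearch 2) k ≤
      undetectedProb ![1 / 2, 15 / 16] ![15 / 19, 4 / 19] ξ k := by
  rw [undetectedProb_eq_exampleUndetected, undetectedProb_eq_exampleUndetected,
    looks_cyclicSearch_one (by norm_num)]
  exact exampleUndetected_le k _

lemma mixedSearchTime_cyclicSearch_two_le (ξ : ℕ → Fin 2) :
    mixedSearchTime (fun _ => 1) ![1 / 2, 15 / 16] ![15 / 19, 4 / 19] (cyclicSearch 2) ≤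
      mixedSearchTime (fun _ => 1) ![1 / 2, 15 / 16] ![15 / 19, 4 / 19] ξ :=
  mixedSearchTime_le_of_undetectedProb_le (fun j => by fin_cases j <;> norm_num)
    (fun j => by fin_cases j <;> norm_num) (undetectedProb_cyclicSearch_two_le ξ)

lemma mixedSearchTime_cyclicSearch_two {p : Fin 2 → ℝ} (hp : ∀ j, 0 ≤ p j) :
    mixedSearchTime (fun _ => 1) ![1 / 2, 15 / 16] p (cyclicSearch 2) =
      ENNReal.ofReal (34 / 15 * p 0 + 10 / 3 * p 1) := by
  rw [mixedSearchTime_eq_ofReal_sum hp (fun j => by fin_cases j <;> norm_num)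
    searchTime_cyclicSearch_two, Fin.sum_univ_two]
  norm_num [mul_comm]

lemma mixedSearchTime_cyclicSearch_one {p : Fin 2 → ℝ} (hp : ∀ j, 0 ≤ p j) :
    mixedSearchTime (fun _ => 1) ![1 / 2, 15 / 16] p (cyclicSearch 1) =
      ENNReal.ofReal (38 / 15 * p 0 + 7 / 3 * p 1) := by
  rw [mixedSearchTime_eq_ofReal_sum hp (fun j => by fin_cases j <;> norm_num)
    searchTime_cyclicSearch_one, Fin.sum_univ_two]
  norm_num [mul_comm]

/-- for two boxes with unit search times, `q_1 = 1/2` and `q_2 = 15/16`,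
the Hider strategy `p' = (15/19, 4/19)` is an optimal (max-min) Hider strategy:
`inf_ξ u(p',ξ) = sup_p inf_ξ u(p,ξ)`, the supremum being over all mixed Hider
strategies. -/
theorem example_optimal_hider_strategy :
    (⨅ ξ : ℕ → Fin 2,
        mixedSearchTime (fun _ => 1) ![1 / 2, 15 / 16] ![15 / 19, 4 / 19] ξ) =
      ⨆ (p : Fin 2 → ℝ) (_ : (∀ j, 0 ≤ p j) ∧ ∑ j, p j = 1),
        ⨅ ξ : ℕ → Fin 2, mixedSearchTime (fun _ => 1) ![1 / 2, 15 / 16] p ξ := by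
  have hp' : (∀ j, 0 ≤ (![15 / 19, 4 / 19] : Fin 2 → ℝ) j) ∧
      ∑ j, (![15 / 19, 4 / 19] : Fin 2 → ℝ) j = 1 :=
    ⟨fun j => by fin_cases j <;> norm_num, by norm_num [Fin.sum_univ_two]⟩
  have hvalue : ⨅ ξ : ℕ → Fin 2,
      mixedSearchTime (fun _ => 1) ![1 / 2, 15 / 16] ![15 / 19, 4 / 19] ξ =
        ENNReal.ofReal (142 / 57) := by
    rw [le_antisymm (iInf_le _ _) (le_iInf mixedSearchTime_cyclicSearch_two_le),
      mixedSearchTime_cyclicSearch_two hp'.1]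
    norm_num
  refine le_antisymm (le_iSup₂_of_le _ hp' le_rfl) (iSup₂_le fun p ⟨hp, hsum⟩ => ?_)
  rw [Fin.sum_univ_two] at hsum
  rw [hvalue]
  rcases le_or_gt (15 / 19) (p 0) with h | h
  · refine (iInf_le _ (cyclicSearch 2)).trans ?_
    rw [mixedSearchTime_cyclicSearch_two hp]
    exact ENNReal.ofReal_le_ofReal (by linarith)
  · refine (iInf_le _ (cyclicSearch 1)).trans ?_
    rw [mixedSearchTime_cyclicSearch_one hp]
    exact ENNReal.ofReal_le_ofReal (by linarith)
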